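/- Let G be a finite connected bipartite graph with parts V⁺ and V⁻ and a positive edge-weight function R with weights around each vertex summing to 2. Then G is non-degenerate: for every edge e of G, there exists a perfect matching M of G with e ∈ M. -/

import Mathlib

open Finset

/-- The simple graph on `P ⊕ N` determined by the bipartite edge set `E ⊆ P × N`. -/
def tilingGraph {P N : Type*} (E : Finset (P × N)) : SimpleGraph (P ⊕ N) :=
  SimpleGraph.fromRel (fun a b => ∃ p n, (p, n) ∈ E ∧ a = Sum.inl p ∧ b = Sum.inr n)

/-- A perfect matching of the bipartite graph with edge set `E ⊆ P × N`. -/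
def IsPerfectMatching {P N : Type*} [DecidableEq P] [DecidableEq N]
    (E M : Finset (P × N)) : Prop :=
  M ⊆ E ∧ (∀ p : P, (M.filter (fun e => e.1 = p)).card = 1) ∧
    (∀ n : N, (M.filter (fun e => e.2 = n)).card = 1)

/-!
A perfect matching through `(p₀, n₀)` is a perfect matching of the graph with `p₀` and `n₀`
deleted, plus that edge. By Hall's theorem this needs `|N(S) \ {n₀}| ≥ |S|` for every set `S` of
white vertices avoiding `p₀`, which follows from the strict Hall inequality `|S| < |N(S)|`.
That comes from the weights: the edges at `S` carry total weight `2|S|` and lie among the edges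
at `N(S)`, of total weight `2|N(S)|`; by connectivity some edge at `N(S)` leaves `S`, and its
positive weight makes the inequality strict.
-/

open Function

theorem sum_filter_mem_eq_card_nsmul {ι κ M : Type*} [DecidableEq κ] [AddCommMonoid M]
    (E : Finset ι) (R : ι → M) (g : ι → κ) {c : M}
    (hc : ∀ k, ∑ e ∈ E.filter (fun e => g e = k), R e = c) (s : Finset κ) :
    ∑ e ∈ E.filter (fun e => g e ∈ s), R e = #s • c := by
  rw [← sum_fiberwise_of_maps_to (g := g) (t := s) (fun e he => (mem_filter.1 he).2),
    ← sum_const]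
  refine sum_congr rfl fun k hk => ?_
  rw [filter_filter, ← hc k]
  exact congrArg (∑ e ∈ ·, R e) (filter_congr fun e _ => by grind)

theorem tilingGraph_adj_iff {P N : Type*} {E : Finset (P × N)} {a b : P ⊕ N} :
    (tilingGraph E).Adj a b ↔ ∃ p n, (p, n) ∈ E ∧
      (a = .inl p ∧ b = .inr n ∨ a = .inr n ∧ b = .inl p) := by
  simp only [tilingGraph, SimpleGraph.fromRel_adj]
  constructor
  · rintro ⟨-, ⟨p, n, he, rfl, rfl⟩ | ⟨p, n, he, rfl, rfl⟩⟩
    exacts [⟨p, n, he, .inl ⟨rfl, rfl⟩⟩, ⟨p, n, he, .inr ⟨rfl, rfl⟩⟩]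
  · rintro ⟨p, n, he, ⟨rfl, rfl⟩ | ⟨rfl, rfl⟩⟩
    exacts [⟨by simp, .inl ⟨p, n, he, rfl, rfl⟩⟩, ⟨by simp, .inr ⟨p, n, he, rfl, rfl⟩⟩]

section

variable {P N : Type*} [DecidableEq P] [DecidableEq N] {E : Finset (P × N)}

def nbr (E : Finset (P × N)) (p : P) : Finset N := (E.filter (fun e => e.1 = p)).image Prod.snd

@[simp]
theorem mem_nbr {p : P} {n : N} : n ∈ nbr E p ↔ (p, n) ∈ E := by
  simp [nbr]

theorem exists_edge_leaving_of_connected (hconn : (tilingGraph E).Connected) {s : Finset P}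
    (hs : s.Nonempty) {p₀ : P} (hp₀ : p₀ ∉ s) :
    ∃ e ∈ E, e.2 ∈ s.biUnion (nbr E) ∧ e.1 ∉ s := by
  obtain ⟨p₁, hp₁⟩ := hs
  obtain ⟨w⟩ := hconn.preconnected (.inl p₁) (.inl p₀)
  let S : Set (P ⊕ N) := {v | Sum.elim (· ∈ s) (· ∈ s.biUnion (nbr E)) v}
  obtain ⟨d, -, hfst, hsnd⟩ := w.exists_boundary_dart S hp₁ hp₀
  obtain ⟨p, n, he, ⟨hp, hn⟩ | ⟨hn, hp⟩⟩ := tilingGraph_adj_iff.1 d.adj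
  · rw [hp] at hfst
    rw [hn] at hsnd
    exact absurd (mem_biUnion.2 ⟨p, hfst, mem_nbr.2 he⟩) hsnd
  · rw [hn] at hfst
    rw [hp] at hsnd
    exact ⟨(p, n), he, hfst, hsnd⟩

variable {R : P × N → ℝ} {c : ℝ}

theorem card_lt_card_biUnion_nbr (hpos : ∀ e ∈ E, 0 < R e)
    (hP : ∀ p : P, ∑ e ∈ E.filter (fun e => e.1 = p), R e = c)
    (hN : ∀ n : N, ∑ e ∈ E.filter (fun e => e.2 = n), R e = c)
    {s : Finset P} {e₀ : P × N} (he₀ : e₀ ∈ E) (hin : e₀.2 ∈ s.biUnion (nbr E))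
    (hout : e₀.1 ∉ s) : #s < #(s.biUnion (nbr E)) := by
  have hsub : E.filter (fun e => e.1 ∈ s) ⊆ E.filter (fun e => e.2 ∈ s.biUnion (nbr E)) :=
    fun e he => by
      rw [mem_filter] at he ⊢
      exact ⟨he.1, mem_biUnion.2 ⟨e.1, he.2, mem_nbr.2 he.1⟩⟩
  have hlt := sum_lt_sum_of_subset hsub (i := e₀) (mem_filter.2 ⟨he₀, hin⟩)
    (fun h => hout (mem_filter.1 h).2) (hpos e₀ he₀) fun e he _ => (hpos e (mem_filter.1 he).1).le
  rw [sum_filter_mem_eq_card_nsmul E R Prod.fst hP,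
    sum_filter_mem_eq_card_nsmul E R Prod.snd hN, nsmul_eq_mul, nsmul_eq_mul] at hlt
  have hc : 0 ≤ c := hP e₀.1 ▸ sum_nonneg fun e he => (hpos e (mem_filter.1 he).1).le
  exact_mod_cast lt_of_mul_lt_mul_right hlt hc

theorem card_eq_card_of_sum_eq [Fintype P] [Fintype N]
    (hP : ∀ p : P, ∑ e ∈ E.filter (fun e => e.1 = p), R e = c)
    (hN : ∀ n : N, ∑ e ∈ E.filter (fun e => e.2 = n), R e = c) (hc : c ≠ 0) :
    Fintype.card P = Fintype.card N := by
  have hP' := sum_filter_mem_eq_card_nsmul E R Prod.fst hP univ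
  have hN' := sum_filter_mem_eq_card_nsmul E R Prod.snd hN univ
  simp only [mem_univ, filter_true, card_univ, nsmul_eq_mul] at hP' hN'
  exact_mod_cast mul_right_cancel₀ hc (hP'.symm.trans hN')

def forcedNbr (E : Finset (P × N)) (p₀ : P) (n₀ : N) (p : P) : Finset N :=
  if p = p₀ then {n₀} else (nbr E p).erase n₀

theorem biUnion_forcedNbr_of_notMem {p₀ : P} {n₀ : N} {s : Finset P} (hs : p₀ ∉ s) :
    s.biUnion (forcedNbr E p₀ n₀) = (s.biUnion (nbr E)).erase n₀ := by
  rw [erase_biUnion]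
  exact biUnion_congr rfl fun p hp => if_neg (ne_of_mem_of_not_mem hp hs)

theorem exists_injective_of_card_lt_card_biUnion_nbr {p₀ : P} {n₀ : N} (he : (p₀, n₀) ∈ E)
    (hhall : ∀ s : Finset P, s.Nonempty → p₀ ∉ s → #s < #(s.biUnion (nbr E))) :
    ∃ f : P → N, Injective f ∧ f p₀ = n₀ ∧ ∀ p, (p, f p) ∈ E := by
  have hall_avoiding : ∀ s : Finset P, p₀ ∉ s → #s ≤ #((s.biUnion (nbr E)).erase n₀) := by
    intro s hs
    rcases s.eq_empty_or_nonempty with rfl | hne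
    · simp
    have := hhall s hne hs
    have := pred_card_le_card_erase (s := s.biUnion (nbr E)) (a := n₀)
    omega
  have hall : ∀ s : Finset P, #s ≤ #(s.biUnion (forcedNbr E p₀ n₀)) := by
    intro s
    by_cases hs : p₀ ∈ s
    · have hs' : p₀ ∉ s.erase p₀ := notMem_erase _ _
      rw [← insert_erase hs, biUnion_insert, biUnion_forcedNbr_of_notMem hs',
        card_insert_of_notMem hs', forcedNbr, if_pos rfl, ← insert_eq,
        card_insert_of_notMem (notMem_erase _ _)]
      exact Nat.succ_le_succ (hall_avoiding _ hs')
    · exact biUnion_forcedNbr_of_notMem (E := E) (n₀ := n₀) hs ▸ hall_avoiding s hs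
  obtain ⟨f, hinj, hf⟩ := (all_card_le_biUnion_card_iff_exists_injective _).1 hall
  have hf₀ : f p₀ = n₀ := by simpa [forcedNbr] using hf p₀
  refine ⟨f, hinj, hf₀, fun p => ?_⟩
  by_cases hp : p = p₀
  · exact hp ▸ hf₀ ▸ he
  · have hfp := hf p
    rw [forcedNbr, if_neg hp, mem_erase, mem_nbr] at hfp
    exact hfp.2

theorem isPerfectMatching_image_graph [Fintype P] {f : P → N} (hf : Bijective f)
    (hE : ∀ p, (p, f p) ∈ E) : IsPerfectMatching E (univ.image fun p => (p, f p)) := by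
  refine ⟨fun e he => ?_, fun p => card_eq_one.2 ⟨(p, f p), ?_⟩, fun n => ?_⟩
  · obtain ⟨p, -, rfl⟩ := mem_image.1 he
    exact hE p
  · ext ⟨q, m⟩
    simp only [mem_filter, mem_image, mem_univ, true_and, mem_singleton, Prod.mk.injEq]
    grind
  · obtain ⟨p, rfl⟩ := hf.2 n
    refine card_eq_one.2 ⟨(p, f p), ?_⟩
    ext ⟨q, m⟩
    simp only [mem_filter, mem_image, mem_univ, true_and, mem_singleton, Prod.mk.injEq]
    have := @hf.1 q p
    grind

end

/-- A finite connected bipartite graph with positive edge weights summing to `2`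
around every vertex is non-degenerate: every edge belongs to some perfect matching. -/
theorem physical_tiling_nondegenerate {P N : Type*} [Fintype P] [Fintype N]
    [DecidableEq P] [DecidableEq N]
    (E : Finset (P × N)) (R : P × N → ℝ)
    (hconn : (tilingGraph E).Connected)
    (hpos : ∀ e ∈ E, 0 < R e)
    (hwhite : ∀ p : P, ∑ e ∈ E.filter (fun e => e.1 = p), R e = 2)
    (hblack : ∀ n : N, ∑ e ∈ E.filter (fun e => e.2 = n), R e = 2) :
    ∀ e ∈ E, ∃ M : Finset (P × N), IsPerfectMatching E M ∧ e ∈ M := by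
  rintro ⟨p₀, n₀⟩ he
  have hhall : ∀ s : Finset P, s.Nonempty → p₀ ∉ s → #s < #(s.biUnion (nbr E)) := by
    intro s hs hp₀
    obtain ⟨e, heE, hin, hout⟩ := exists_edge_leaving_of_connected hconn hs hp₀
    exact card_lt_card_biUnion_nbr hpos hwhite hblack heE hin hout
  obtain ⟨f, hinj, hf₀, hfE⟩ := exists_injective_of_card_lt_card_biUnion_nbr he hhall
  have hbij : Bijective f := (Fintype.bijective_iff_injective_and_card f).2
    ⟨hinj, card_eq_card_of_sum_eq hwhite hblack two_ne_zero⟩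
  exact ⟨_, isPerfectMatching_image_graph hbij hfE, mem_image.2 ⟨p₀, mem_univ _, by rw [hf₀]⟩⟩
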